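/- arXiv:2107.06669 — 3 statements merged into one kernel-verified Lean document; each statement's English description precedes it below -/
import Mathlib

section
/- Let φ ∈ L^∞(𝕋), λ ∈ 𝕋, and suppose φ = f + conj(C_λ f) for some f ∈ H² ∩ L^∞. Then the Toeplitz operator T_φ is C_λ-symmetric on H², i.e., C_λ T_φ C_λ = T_φ*. -/
open MeasureTheory Complex Real AddCircle
open scoped ComplexConjugate

noncomputable section

instance fact2pi : Fact (0 < 2 * π) := ⟨by positivity⟩

/-- Normalized Haar measure on the circle. -/
abbrev μH : Measure (AddCircle (2 * π)) := AddCircle.haarAddCircle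

/-- The Hardy space `H²`, realized as the closed span of the nonnegative Fourier modes
inside `L²(𝕋)`. -/
def HardyH2 : Submodule ℂ (Lp ℂ 2 μH) :=
  (Submodule.span ℂ (Set.range fun n : ℕ => fourierLp 2 (n : ℤ))).topologicalClosure

instance : CompleteSpace HardyH2 :=
  (Submodule.isClosed_topologicalClosure _).completeSpace_coe

/-- The Szegő (orthogonal) projection `P : L²(𝕋) → H²`. -/
def szego : Lp ℂ 2 μH →L[ℂ] HardyH2 := (HardyH2 : Submodule ℂ (Lp ℂ 2 μH)).orthogonalProjectionOnto

/-- The Toeplitz operator `T_φ f = P(φ f)` with symbol `φ`. -/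
def toeplitz (φ : AddCircle (2 * π) → ℂ)
    (hφ : ∀ f : Lp ℂ 2 μH, MemLp (fun x => φ x * f x) 2 μH) (g : HardyH2) : HardyH2 :=
  szego ((hφ (g : Lp ℂ 2 μH)).toLp _)

/-- The Möbius transformation `φ_a`. -/
def moebius (a z : ℂ) : ℂ := (a - z) / (1 - conj a * z)

/-!
Write `λ = e^{ic}`; on boundary functions `C_λ h = conj ∘ h ∘ (c - ·)`. For `g, h ∈ H²`,
`⟪C_λ T_φ C_λ g, h⟫ = ⟪C_λ h, T_φ C_λ g⟫ = ⟪C_λ h, φ · C_λ g⟫` because `C_λ h ∈ H²`, and the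
substitution `x ↦ c - x` turns the last integral into `⟪g, φ h⟫ = ⟪g, T_φ h⟫`, since
`φ = f + f(c - ·)` is invariant under it.
-/
section ConjReflection

variable {G : Type*} [MeasurableSpace G] [AddCommGroup G] {μ : Measure G}

def IsConjReflection (μ : Measure G) (c : G) (C : Lp ℂ 2 μ → Lp ℂ 2 μ) : Prop :=
  ∀ h : Lp ℂ 2 μ, (C h : G → ℂ) =ᵐ[μ] fun x => conj (h (c - x))

variable {c : G} {C : Lp ℂ 2 μ → Lp ℂ 2 μ}

lemma IsConjReflection.inner_left_eq_integral (hC : IsConjReflection μ c C) (u v : Lp ℂ 2 μ) :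
    inner ℂ (C u) v = ∫ x, u (c - x) * v x ∂μ := by
  rw [L2.inner_def]
  refine integral_congr_ae ?_
  filter_upwards [hC u] with x hx
  rw [RCLike.inner_apply', hx, conj_conj]

variable [MeasurableAdd G] [MeasurableNeg G] [μ.IsNegInvariant] [μ.IsAddLeftInvariant]

lemma IsConjReflection.inner_comm (hC : IsConjReflection μ c C) (u v : Lp ℂ 2 μ) :
    inner ℂ (C u) v = inner ℂ (C v) u := by
  rw [hC.inner_left_eq_integral, hC.inner_left_eq_integral,
    ← integral_sub_left_eq_self (fun x => v (c - x) * u x) μ c]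
  simp only [sub_sub_cancel, mul_comm]

lemma IsConjReflection.inner_mul_symbol (hC : IsConjReflection μ c C) {φ : G → ℂ}
    (hφ : ∀ x, φ (c - x) = φ x) (hφm : ∀ h : Lp ℂ 2 μ, MemLp (fun x => φ x * h x) 2 μ)
    (g h : Lp ℂ 2 μ) :
    inner ℂ (C h) ((hφm (C g)).toLp _) = inner ℂ g ((hφm h).toLp _) := by
  have hφCg : ((hφm (C g)).toLp _ : G → ℂ) =ᵐ[μ] fun x => φ x * conj (g (c - x)) := by
    filter_upwards [(hφm (C g)).coeFn_toLp, hC g] with x hx hgx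
    rw [hx, hgx]
  calc inner ℂ (C h) ((hφm (C g)).toLp _)
      = ∫ x, h (c - x) * (φ x * conj (g (c - x))) ∂μ := by
        rw [hC.inner_left_eq_integral]
        exact integral_congr_ae (hφCg.mono fun x hx => by simp only [hx])
    _ = ∫ x, h x * (φ (c - x) * conj (g x)) ∂μ := by
        rw [← integral_sub_left_eq_self _ μ c]
        simp only [sub_sub_cancel]
    _ = inner ℂ g ((hφm h).toLp _) := by
        rw [L2.inner_def]
        refine integral_congr_ae ?_
        filter_upwards [(hφm h).coeFn_toLp] with x hx
        rw [RCLike.inner_apply', hx, hφ]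
        ring

end ConjReflection

lemma inner_toeplitz_of_mem {v : Lp ℂ 2 μH} (hv : v ∈ HardyH2) (φ : AddCircle (2 * π) → ℂ)
    (hφm : ∀ h : Lp ℂ 2 μH, MemLp (fun x => φ x * h x) 2 μH) (g : HardyH2) :
    inner ℂ v (toeplitz φ hφm g : Lp ℂ 2 μH) = inner ℂ v ((hφm g).toLp _) :=
  (HardyH2.coe_inner ⟨v, hv⟩ _).symm.trans
    (HardyH2.inner_orthogonalProjectionOnto_eq_of_mem_left ⟨v, hv⟩ _)

theorem stmt8_general (c : AddCircle (2 * π))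
    (CL : Lp ℂ 2 μH → Lp ℂ 2 μH)
    (hCL : ∀ h : Lp ℂ 2 μH,
      (CL h : AddCircle (2 * π) → ℂ) =ᵐ[μH] fun x => conj (h (c - x)))
    (hCLH : ∀ h : Lp ℂ 2 μH, h ∈ HardyH2 → CL h ∈ HardyH2)
    (fc : AddCircle (2 * π) → ℂ)
    (Cf : AddCircle (2 * π) → ℂ) (hCf : ∀ x, Cf x = conj (fc (c - x)))
    (φ : AddCircle (2 * π) → ℂ) (hφdef : ∀ x, φ x = fc x + conj (Cf x))
    (hφm : ∀ h : Lp ℂ 2 μH, MemLp (fun x => φ x * h x) 2 μH) :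
    ∀ g h : HardyH2,
      (inner ℂ (CL ((toeplitz φ hφm ⟨CL (g : Lp ℂ 2 μH), hCLH _ g.2⟩ : HardyH2) : Lp ℂ 2 μH))
          ((h : HardyH2) : Lp ℂ 2 μH) : ℂ) =
        (inner ℂ ((g : HardyH2) : Lp ℂ 2 μH)
          ((toeplitz φ hφm h : HardyH2) : Lp ℂ 2 μH) : ℂ) := by
  intro g h
  have hCL' : IsConjReflection μH c CL := hCL
  have hφ : ∀ x, φ (c - x) = φ x := fun x => by
    simp only [hφdef, hCf, conj_conj, sub_sub_cancel, add_comm]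
  rw [hCL'.inner_comm, inner_toeplitz_of_mem (hCLH _ h.2), inner_toeplitz_of_mem g.2]
  exact hCL'.inner_mul_symbol hφ hφm g h

/-- If `φ = f + conj (C_λ f)` with `f ∈ H² ∩ L^∞`, then the Toeplitz operator `T_φ` is
`C_λ`-symmetric: `C_λ T_φ C_λ = T_φ*`, expressed via inner products. -/
theorem stmt8 (c : AddCircle (2 * π))
    (CL : Lp ℂ 2 μH → Lp ℂ 2 μH)
    (hCL : ∀ h : Lp ℂ 2 μH,
      (CL h : AddCircle (2 * π) → ℂ) =ᵐ[μH] fun x => conj (h (c - x)))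
    (hCLH : ∀ h : Lp ℂ 2 μH, h ∈ HardyH2 → CL h ∈ HardyH2)
    (fc : AddCircle (2 * π) → ℂ)
    (hfb : MemLp fc ⊤ μH) (hf2 : MemLp fc 2 μH) (hfH : hf2.toLp fc ∈ HardyH2)
    (Cf : AddCircle (2 * π) → ℂ) (hCf : ∀ x, Cf x = conj (fc (c - x)))
    (φ : AddCircle (2 * π) → ℂ) (hφdef : ∀ x, φ x = fc x + conj (Cf x))
    (hφm : ∀ h : Lp ℂ 2 μH, MemLp (fun x => φ x * h x) 2 μH) :
    ∀ g h : HardyH2,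
      (inner ℂ (CL ((toeplitz φ hφm ⟨CL (g : Lp ℂ 2 μH), hCLH _ g.2⟩ : HardyH2) : Lp ℂ 2 μH))
          ((h : HardyH2) : Lp ℂ 2 μH) : ℂ) =
        (inner ℂ ((g : HardyH2) : Lp ℂ 2 μH)
          ((toeplitz φ hφm h : HardyH2) : Lp ℂ 2 μH) : ℂ) :=
  stmt8_general c CL hCL hCLH fc Cf hCf φ hφdef hφm

end
end

section
/- Let q ∈ 𝕋 and b ∈ 𝔻 with q·b ≠ conj(b). Then |conj(q)(1 − |b|²) + b²| < 1. -/
open scoped ComplexConjugate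

/-! For `‖q‖ = 1` the defect `1 - ‖conj q (1 - ‖b‖²) + b²‖²` equals `(1 - ‖b‖²) ‖q b - conj b‖²`,
which is positive when `‖b‖ < 1` and `q b ≠ conj b`. -/

theorem sq_norm_conj_mul_add_sq_add_mul_sq_norm_sub_conj (q b : ℂ) :
    ‖conj q * ((1 : ℂ) - (‖b‖ ^ 2 : ℝ)) + b ^ 2‖ ^ 2 + (1 - ‖b‖ ^ 2) * ‖q * b - conj b‖ ^ 2 =
      ‖q‖ ^ 2 * (1 - ‖b‖ ^ 2) + ‖b‖ ^ 2 := by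
  simp_rw [Complex.sq_norm, Complex.normSq_apply]
  simp only [Complex.add_re, Complex.add_im,
    Complex.mul_re, Complex.mul_im, Complex.sub_re, Complex.sub_im, Complex.conj_re,
    Complex.conj_im, Complex.ofReal_re, Complex.ofReal_im, Complex.one_re, Complex.one_im, pow_two]
  ring

/-- For `q ∈ 𝕋` and `b ∈ 𝔻` with `q·b ≠ conj b`, one has `|conj q (1 - |b|²) + b²| < 1`. -/
theorem stmt10 (q b : ℂ) (hq : ‖q‖ = 1) (hb : ‖b‖ < 1) (hqb : q * b ≠ conj b) :
    ‖conj q * ((1 : ℂ) - (‖b‖ ^ 2 : ℝ)) + b ^ 2‖ < 1 := by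
  have hr : 0 < 1 - ‖b‖ ^ 2 := sub_pos.mpr (pow_lt_one₀ (norm_nonneg b) hb two_ne_zero)
  have hgap : 0 < ‖q * b - conj b‖ := norm_pos_iff.mpr (sub_ne_zero.mpr hqb)
  have key := sq_norm_conj_mul_add_sq_add_mul_sq_norm_sub_conj q b
  rw [hq] at key
  refine (sq_lt_one_iff₀ (norm_nonneg _)).mp ?_
  nlinarith [mul_pos hr (pow_pos hgap 2)]
end

section
/- Let T be a bounded self-adjoint operator of finite rank on a Hilbert space H, and D an anti-unitary operator on H with DT = −TD. Then the range of T reduces D (i.e., D maps ran T into ran T and ker T into ker T), and tr(T) = 0. -/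
open scoped ComplexConjugate

local notation "⟪" x ", " y "⟫" => @inner ℂ _ _ x y

/-- Trace of an endomorphism of a finite-dimensional inner product space as a sum of diagonal
inner products over an orthonormal basis. -/
lemma aux_trace_eq_sum_inner {V : Type*} [NormedAddCommGroup V] [InnerProductSpace ℂ V]
    [FiniteDimensional ℂ V] {ι : Type*} [Fintype ι] [DecidableEq ι]
    (b : OrthonormalBasis ι ℂ V) (A : V →ₗ[ℂ] V) :
    LinearMap.trace ℂ V A = ∑ i, ⟪b i, A (b i)⟫ := by
  rw [LinearMap.trace_eq_matrix_trace ℂ b.toBasis, Matrix.trace]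
  congr 1
  ext i
  rw [Matrix.diag_apply, LinearMap.toMatrix_apply, OrthonormalBasis.coe_toBasis,
    b.coe_toBasis_repr_apply, b.repr_apply_apply]

/-- An anti-unitary map conjugates inner products. -/
lemma aux_anti_inner {H : Type*} [NormedAddCommGroup H] [InnerProductSpace ℂ H]
    (D : H → H)
    (hDadd : ∀ x y : H, D (x + y) = D x + D y)
    (hDsmul : ∀ (a : ℂ) (x : H), D (a • x) = conj a • D x)
    (hDiso : ∀ x : H, ‖D x‖ = ‖x‖) (x y : H) :
    ⟪D x, D y⟫ = ⟪y, x⟫ := by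
  have hDneg : ∀ z : H, D (-z) = -D z := by
    intro z
    have := hDsmul (-1) z
    simpa using this
  have hDsub : ∀ a b : H, D (a - b) = D a - D b := by
    intro a b
    rw [sub_eq_add_neg, hDadd, hDneg, sub_eq_add_neg]
  have hDI : ∀ z : H, D (Complex.I • z) = -(Complex.I • D z) := by
    intro z
    rw [hDsmul, Complex.conj_I, neg_smul]
  have h1 : ‖D x + D y‖ = ‖x + y‖ := by rw [← hDadd, hDiso]
  have h2 : ‖D x - D y‖ = ‖x - y‖ := by rw [← hDsub, hDiso]
  have h3 : ‖D x - Complex.I • D y‖ = ‖x + Complex.I • y‖ := by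
    rw [← hDiso (x + Complex.I • y), hDadd, hDI, ← sub_eq_add_neg]
  have h4 : ‖D x + Complex.I • D y‖ = ‖x - Complex.I • y‖ := by
    rw [← hDiso (x - Complex.I • y), hDsub, hDI, sub_neg_eq_add]
  have k1 : ‖x + y‖ = ‖y + x‖ := by rw [add_comm]
  have k2 : ‖x - y‖ = ‖y - x‖ := norm_sub_rev _ _
  have k3 : ‖x + Complex.I • y‖ = ‖y - Complex.I • x‖ := by
    have hz : y - Complex.I • x = (-Complex.I) • (x + Complex.I • y) := by
      rw [smul_add, smul_smul]
      simp [neg_smul, Complex.I_mul_I]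
      abel
    rw [hz, norm_smul]
    simp
  have k4 : ‖x - Complex.I • y‖ = ‖y + Complex.I • x‖ := by
    have hz : y + Complex.I • x = Complex.I • (x - Complex.I • y) := by
      rw [smul_sub, smul_smul]
      simp [Complex.I_mul_I]
      abel
    rw [hz, norm_smul]
    simp
  rw [inner_eq_sum_norm_sq_div_four (𝕜 := ℂ) (D x) (D y),
    inner_eq_sum_norm_sq_div_four (𝕜 := ℂ) y x]
  simp only [RCLike.I_to_complex]
  rw [h1, h2, h3, h4, k1, k2, k3, k4]

/-- If `T` is a bounded self-adjoint finite-rank operator on a complex Hilbert space and `D` is an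
anti-unitary operator with `DT = -TD`, then `ran T` and `ker T` are invariant under `D`, and the
trace of `T` (i.e. of its restriction to its range) is zero. -/
theorem stmt14 {H : Type*} [NormedAddCommGroup H] [InnerProductSpace ℂ H] [CompleteSpace H]
    (T : H →L[ℂ] H) (hsa : IsSelfAdjoint T)
    (hfr : FiniteDimensional ℂ (LinearMap.range (T : H →ₗ[ℂ] H)))
    (D : H → H)
    (hDadd : ∀ x y : H, D (x + y) = D x + D y)
    (hDsmul : ∀ (a : ℂ) (x : H), D (a • x) = conj a • D x)
    (hDbij : Function.Bijective D)
    (hDiso : ∀ x : H, ‖D x‖ = ‖x‖)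
    (hanti : ∀ x : H, D (T x) = -(T (D x))) :
    (∀ x ∈ LinearMap.range (T : H →ₗ[ℂ] H), D x ∈ LinearMap.range (T : H →ₗ[ℂ] H)) ∧
    (∀ x ∈ LinearMap.ker (T : H →ₗ[ℂ] H), D x ∈ LinearMap.ker (T : H →ₗ[ℂ] H)) ∧
    (∀ T' : LinearMap.range (T : H →ₗ[ℂ] H) →ₗ[ℂ] LinearMap.range (T : H →ₗ[ℂ] H),
      (∀ x, (T' x : H) = T (x : H)) → LinearMap.trace ℂ _ T' = 0) := by
  classical
  set V := LinearMap.range (T : H →ₗ[ℂ] H) with hVdef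
  have hD0 : D 0 = 0 := by
    have h := hDadd 0 0
    rw [add_zero] at h
    exact (left_eq_add.mp h)
  have hTD : ∀ x : H, T (D x) = -(D (T x)) := by
    intro x
    rw [hanti x, neg_neg]
  have hran : ∀ x ∈ V, D x ∈ V := by
    rintro x ⟨y, rfl⟩
    refine ⟨-(D y), ?_⟩
    simp only [ContinuousLinearMap.coe_coe, map_neg]
    rw [hTD]
    simp
  refine ⟨hran, ?_, ?_⟩
  · intro x hx
    have hx0 : T x = 0 := hx
    show (T : H →ₗ[ℂ] H) (D x) = 0
    simp only [ContinuousLinearMap.coe_coe]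
    rw [hTD, hx0, hD0, neg_zero]
  · intro T' hT'
    have hDinner : ∀ x y : H, ⟪D x, D y⟫ = ⟪y, x⟫ :=
      aux_anti_inner D hDadd hDsmul hDiso
    set n := Module.finrank ℂ V with hn
    let e : OrthonormalBasis (Fin n) ℂ V := stdOrthonormalBasis ℂ V
    let f : Fin n → V := fun i => ⟨D (e i : H), hran _ (e i).2⟩
    have hf : Orthonormal ℂ f := by
      rw [orthonormal_iff_ite]
      intro i j
      have he := orthonormal_iff_ite.mp e.orthonormal j i
      rw [Submodule.coe_inner] at he ⊢
      show ⟪D (e i : H), D (e j : H)⟫ = _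
      rw [hDinner, he]
      simp [eq_comm]
    have hsp : ⊤ ≤ Submodule.span ℂ (Set.range f) :=
      (hf.linearIndependent.span_eq_top_of_card_eq_finrank'
        (by simp [hn])).ge
    let fb : OrthonormalBasis (Fin n) ℂ V := OrthonormalBasis.mk hf hsp
    have ht1 : LinearMap.trace ℂ V T' = ∑ i, ⟪(e i : H), T (e i : H)⟫ := by
      rw [aux_trace_eq_sum_inner e T']
      congr 1
      ext i
      rw [Submodule.coe_inner, hT']
    have ht2 : LinearMap.trace ℂ V T' = -conj (LinearMap.trace ℂ V T') := by
      conv_lhs => rw [aux_trace_eq_sum_inner fb T']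
      rw [ht1, map_sum, ← Finset.sum_neg_distrib]
      congr 1
      ext i
      rw [Submodule.coe_inner, hT']
      have hfb : fb i = f i := by
        simp only [fb, OrthonormalBasis.coe_mk]
      rw [hfb]
      show ⟪D (e i : H), T (D (e i : H))⟫ = _
      rw [hTD, inner_neg_right, hDinner, ← inner_conj_symm]
    have hsym : conj (LinearMap.trace ℂ V T') = LinearMap.trace ℂ V T' := by
      rw [ht1, map_sum]
      congr 1
      ext i
      rw [inner_conj_symm]
      exact hsa.isSymmetric _ _
    rw [hsym] at ht2
    linear_combination ht2 / 2
end
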